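/- arXiv:1203.6146 — 2 statements merged into one kernel-verified Lean document; each statement's English description precedes it below -/
import Mathlib

section
/- Under the assumptions G_u(0) < 1 and ME[u] < 1, one has G_u(t) ≤ ω := √(ME[u]) for all t in the interval of existence, and moreover 16(1 − ω^{p−1}) E[u] ≤ 8(1 − ω^{p−1}) ‖∇u(t)‖_{L²}² ≤ 8‖∇u(t)‖_{L²}² − (4d(p−1)/(p+1)) ‖u(t)‖_{L^{p+1}}^{p+1}. -/
open MeasureTheory

noncomputable section

abbrev Ed (d : ℕ) := EuclideanSpace ℝ (Fin d)

def massI (d : ℕ) (f : Ed d → ℂ) : ℝ := ∫ x : Ed d, ‖f x‖ ^ 2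

def gradI (d : ℕ) (f : Ed d → ℂ) : ℝ := ∫ x : Ed d, ‖fderiv ℝ f x‖ ^ 2

def potI (d : ℕ) (p : ℝ) (f : Ed d → ℂ) : ℝ := ∫ x : Ed d, ‖f x‖ ^ (p + 1)

def energyI (d : ℕ) (p : ℝ) (f : Ed d → ℂ) : ℝ :=
  (1 / 2) * gradI d f - (1 / (p + 1)) * potI d p f

/-- Renormalized gradient, with `nQ = ‖u_Q‖_{L²}^{1−s}‖∇u_Q‖_{L²}^{s}`. -/
def Gren (d : ℕ) (s nQ : ℝ) (f : Ed d → ℂ) : ℝ :=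
  ((massI d f) ^ ((1 - s) / 2) * (gradI d f) ^ (s / 2)) / nQ

/-- Renormalized mass-energy, with `meQ = M[u_Q]^{1−s}E[u_Q]^{s}`. -/
def MEren (d : ℕ) (p s meQ : ℝ) (f : Ed d → ℂ) : ℝ :=
  ((massI d f) ^ (1 - s) * (energyI d p f) ^ s) / meQ

/-- Lower bound on the convexity of the variance: under `G_u(0) < 1` and `ME[u] < 1`
(whence `G_u(t) < 1` for all `t`), one has `G_u(t) ≤ ω := √(ME[u])` for all `t` and
`16(1−ω^{p−1})E[u] ≤ 8(1−ω^{p−1})‖∇u(t)‖² ≤ 8‖∇u(t)‖² − (4d(p−1)/(p+1))‖u(t)‖_{p+1}^{p+1}`. -/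
theorem lower_bound_convexity_variance (d : ℕ) (p s α : ℝ) (hd : 1 ≤ d) (hp : 1 < p)
    (hs : s = (d : ℝ) / 2 - 2 / (p - 1)) (hs0 : 0 < s) (hs1 : s < 1)
    (hα : α = Real.sqrt ((d : ℝ) * (p - 1)) / 2)
    (qn : ℝ) (hqn : 0 < qn)  -- qn = ‖Q‖_{L²}
    (CGN : ℝ) (hCGN : CGN = (p + 1) / (2 * qn ^ (p - 1)))
    (nQ : ℝ) (hnQ : nQ = α ^ (-(2 / (p - 1))) * qn)
    (mQ eQ : ℝ) (hmQ : 0 < mQ) (heQ : 0 < eQ)  -- M[u_Q], E[u_Q]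
    -- ‖∇u_Q‖² = (d/s) E[u_Q] and consistency of the normalizer:
    (hQnorm : nQ = mQ ^ ((1 - s) / 2) * (((d : ℝ) / s) * eQ) ^ (s / 2))
    (meQ : ℝ) (hmeQ : meQ = mQ ^ (1 - s) * eQ ^ s)
    (u : ℝ → Ed d → ℂ)
    -- conservation of mass and energy:
    (hmass : ∀ t : ℝ, massI d (u t) = massI d (u 0))
    (hener : ∀ t : ℝ, energyI d p (u t) = energyI d p (u 0))
    -- sharp Gagliardo–Nirenberg inequality:
    (hGN : ∀ t : ℝ, potI d p (u t)
      ≤ CGN * (gradI d (u t)) ^ ((d : ℝ) * (p - 1) / 4)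
          * (massI d (u t)) ^ ((2 - ((d : ℝ) - 2) * (p - 1) / 2) / 2))
    -- comparison of energy and gradient (valid since G_u(t) ≤ 1):
    (hcomp : ∀ t : ℝ, (s / d) * gradI d (u t) ≤ energyI d p (u t))
    (hG0 : Gren d s nQ (u 0) < 1)
    (hGall : ∀ t : ℝ, Gren d s nQ (u t) < 1)
    (hME : MEren d p s meQ (u 0) < 1) :
    ∀ t : ℝ,
      Gren d s nQ (u t) ≤ Real.sqrt (MEren d p s meQ (u 0)) ∧
      16 * (1 - Real.sqrt (MEren d p s meQ (u 0)) ^ (p - 1)) * energyI d p (u 0)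
        ≤ 8 * (1 - Real.sqrt (MEren d p s meQ (u 0)) ^ (p - 1)) * gradI d (u t) ∧
      8 * (1 - Real.sqrt (MEren d p s meQ (u 0)) ^ (p - 1)) * gradI d (u t)
        ≤ 8 * gradI d (u t) - (4 * (d : ℝ) * (p - 1) / (p + 1)) * potI d p (u t) := by
  -- basic positivity facts
  have hd0 : (0:ℝ) < (d:ℝ) := by exact_mod_cast Nat.lt_of_lt_of_le Nat.zero_lt_one hd
  have hp1 : (0:ℝ) < p - 1 := by linarith
  have hp1' : (0:ℝ) < p + 1 := by linarith
  have hds : (0:ℝ) < (d:ℝ) / s := div_pos hd0 hs0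
  have hmeQ0 : 0 < meQ := by
    rw [hmeQ]
    exact mul_pos (Real.rpow_pos_of_pos hmQ _) (Real.rpow_pos_of_pos heQ _)
  have hnQ0 : 0 < nQ := by
    rw [hQnorm]
    exact mul_pos (Real.rpow_pos_of_pos hmQ _)
      (Real.rpow_pos_of_pos (mul_pos hds heQ) _)
  have hCGN0 : 0 < CGN := by
    rw [hCGN]
    exact div_pos hp1' (by positivity)
  intro t
  have hM0 : 0 ≤ massI d (u 0) := integral_nonneg fun x => by positivity
  have hg0 : 0 ≤ gradI d (u t) := integral_nonneg fun x => by positivity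
  have hguz : 0 ≤ gradI d (u 0) := integral_nonneg fun x => by positivity
  have hpt0 : 0 ≤ potI d p (u t) := integral_nonneg fun x =>
    Real.rpow_nonneg (norm_nonneg _) _
  have hE0 : 0 ≤ energyI d p (u 0) :=
    le_trans (mul_nonneg (le_of_lt (div_pos hs0 hd0)) hguz) (hcomp 0)
  set M0 := massI d (u 0) with hM0def
  set E0 := energyI d p (u 0) with hE0def
  set g := gradI d (u t) with hgdef
  set pt := potI d p (u t) with hptdef
  have hmasst : massI d (u t) = M0 := hmass t
  have henert : energyI d p (u t) = E0 := hener t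
  have hgE : g ≤ ((d:ℝ) / s) * E0 := by
    have h := hcomp t
    rw [henert] at h
    calc g = ((d:ℝ)/s) * ((s/(d:ℝ)) * g) := by
              field_simp
      _ ≤ ((d:ℝ)/s) * E0 := mul_le_mul_of_nonneg_left h hds.le
  have hMEform : MEren d p s meQ (u 0) = M0 ^ (1 - s) * E0 ^ s / meQ := rfl
  have hME0 : 0 ≤ MEren d p s meQ (u 0) := by
    rw [hMEform]
    exact div_nonneg (mul_nonneg (Real.rpow_nonneg hM0 _) (Real.rpow_nonneg hE0 _)) hmeQ0.le
  -- squaring rpow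
  have hsq : ∀ x a : ℝ, 0 ≤ x → (x ^ a) ^ (2:ℕ) = x ^ (a * 2) := by
    intro x a hx
    rw [← Real.rpow_natCast (x ^ a) 2, ← Real.rpow_mul hx]
    norm_num
  have hhalf1 : (1 - s) / 2 * 2 = 1 - s := by ring
  have hhalf2 : s / 2 * 2 = s := by ring
  have hnQsq : nQ ^ (2:ℕ) = mQ ^ (1 - s) * (((d:ℝ)/s) ^ s * eQ ^ s) := by
    rw [hQnorm, mul_pow, hsq _ _ hmQ.le, hsq _ _ (mul_pos hds heQ).le, hhalf1, hhalf2,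
      Real.mul_rpow hds.le heQ.le]
  -- Part 1 : Gren (u t) ≤ sqrt ME
  have hGform : Gren d s nQ (u t) = M0 ^ ((1 - s) / 2) * g ^ (s / 2) / nQ := by
    rw [Gren, hmasst]
  have hGren0 : 0 ≤ Gren d s nQ (u t) := by
    rw [hGform]
    exact div_nonneg (mul_nonneg (Real.rpow_nonneg hM0 _) (Real.rpow_nonneg hg0 _)) hnQ0.le
  have hGsq : Gren d s nQ (u t) ^ (2:ℕ) ≤ MEren d p s meQ (u 0) := by
    rw [hGform, div_pow, mul_pow, hsq _ _ hM0, hsq _ _ hg0, hhalf1, hhalf2, hMEform]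
    have key : M0 ^ (1 - s) * g ^ s ≤ M0 ^ (1 - s) * (((d:ℝ)/s) ^ s * E0 ^ s) := by
      apply mul_le_mul_of_nonneg_left _ (Real.rpow_nonneg hM0 _)
      rw [← Real.mul_rpow hds.le hE0]
      exact Real.rpow_le_rpow hg0 hgE hs0.le
    have heq : M0 ^ (1 - s) * (((d:ℝ)/s) ^ s * E0 ^ s) / nQ ^ (2:ℕ)
        = M0 ^ (1 - s) * E0 ^ s / meQ := by
      rw [hnQsq, hmeQ]
      have h1 : (((d:ℝ)/s) ^ s : ℝ) ≠ 0 := ne_of_gt (Real.rpow_pos_of_pos hds _)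
      have h2 : mQ ^ (1 - s) ≠ 0 := ne_of_gt (Real.rpow_pos_of_pos hmQ _)
      have h3 : eQ ^ s ≠ 0 := ne_of_gt (Real.rpow_pos_of_pos heQ _)
      field_simp
    calc M0 ^ (1 - s) * g ^ s / nQ ^ (2:ℕ)
        ≤ M0 ^ (1 - s) * (((d:ℝ)/s) ^ s * E0 ^ s) / nQ ^ (2:ℕ) := by
          gcongr
      _ = M0 ^ (1 - s) * E0 ^ s / meQ := heq
  have part1 : Gren d s nQ (u t) ≤ Real.sqrt (MEren d p s meQ (u 0)) :=
    (Real.le_sqrt hGren0 hME0).mpr hGsq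
  -- common facts about ω and W
  set ω := Real.sqrt (MEren d p s meQ (u 0)) with hωdef
  set W := ω ^ (p - 1) with hWdef
  have hω0 : 0 ≤ ω := Real.sqrt_nonneg _
  have hω1 : ω < 1 := by
    have := Real.sqrt_lt_sqrt hME0 hME
    simpa using this
  have hW0 : 0 ≤ W := Real.rpow_nonneg hω0 _
  have hW1 : W < 1 := Real.rpow_lt_one hω0 hω1 hp1
  have hEform : E0 = 1/2 * g - 1/(p+1) * pt := by
    rw [← henert]; rfl
  -- goal 2 : 16(1-W)E0 ≤ 8(1-W)g
  have goal2 : 16 * (1 - W) * E0 ≤ 8 * (1 - W) * g := by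
    have h2E : 2 * E0 ≤ g := by
      have hq : 0 ≤ 1/(p+1) * pt := mul_nonneg (by positivity) hpt0
      rw [hEform]; linarith
    have hprod : 0 ≤ (1 - W) * (g - 2 * E0) :=
      mul_nonneg (by linarith) (by linarith)
    linarith [hprod]
  -- goal 3
  have ha : (d:ℝ) * (p - 1) / 4 = 1 + s / 2 * (p - 1) := by
    rw [hs]; field_simp; ring
  have hθ : (2 - ((d:ℝ) - 2) * (p - 1) / 2) / 2 = (1 - s) / 2 * (p - 1) := by
    rw [hs]; field_simp; ring
  have hane : (1:ℝ) + s / 2 * (p - 1) ≠ 0 := by positivity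
  have e1 : g ^ ((d:ℝ) * (p - 1) / 4) = g * (g ^ (s/2)) ^ (p - 1) := by
    rw [ha, Real.rpow_add' hg0 hane, Real.rpow_one, Real.rpow_mul hg0]
  have e2 : M0 ^ ((2 - ((d:ℝ) - 2) * (p - 1) / 2) / 2)
      = (M0 ^ ((1 - s)/2)) ^ (p - 1) := by
    rw [hθ, Real.rpow_mul hM0]
  have hN : 0 ≤ M0 ^ ((1 - s)/2) * g ^ (s/2) :=
    mul_nonneg (Real.rpow_nonneg hM0 _) (Real.rpow_nonneg hg0 _)
  have hNle : M0 ^ ((1 - s)/2) * g ^ (s/2) ≤ ω * nQ := by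
    have h1 := part1
    rw [hGform] at h1
    calc M0 ^ ((1 - s)/2) * g ^ (s/2)
        = M0 ^ ((1 - s)/2) * g ^ (s/2) / nQ * nQ := by
          field_simp
      _ ≤ ω * nQ := mul_le_mul_of_nonneg_right h1 hnQ0.le
  have hNp : (M0 ^ ((1 - s)/2) * g ^ (s/2)) ^ (p - 1) ≤ W * nQ ^ (p - 1) := by
    rw [hWdef, ← Real.mul_rpow hω0 hnQ0.le]
    exact Real.rpow_le_rpow hN hNle hp1.le
  have hα0 : 0 < α := by
    rw [hα]
    have : 0 < Real.sqrt ((d:ℝ) * (p - 1)) :=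
      Real.sqrt_pos.mpr (by positivity)
    linarith
  have hqnp : (0:ℝ) < qn ^ (p - 1) := Real.rpow_pos_of_pos hqn _
  have hCnQ : CGN * nQ ^ (p - 1) = 2 * (p + 1) / ((d:ℝ) * (p - 1)) := by
    rw [hCGN, hnQ, Real.mul_rpow (Real.rpow_nonneg hα0.le _) hqn.le,
      ← Real.rpow_mul hα0.le]
    have hexp : -(2/(p-1)) * (p - 1) = -2 := by field_simp
    rw [hexp]
    have hα2 : α ^ (-2 : ℝ) = 4 / ((d:ℝ) * (p - 1)) := by
      rw [show ((-2:ℝ)) = ((-2 : ℤ) : ℝ) by norm_num, Real.rpow_intCast, hα]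
      rw [zpow_neg, show ((2:ℤ)) = ((2:ℕ):ℤ) by norm_num, zpow_natCast, div_pow,
        Real.sq_sqrt (by positivity)]
      norm_num
    rw [hα2]
    field_simp
    ring
  have hpotb : pt ≤ 2 * (p + 1) / ((d:ℝ) * (p - 1)) * W * g := by
    have hGN' := hGN t
    rw [hmasst] at hGN'
    calc pt ≤ CGN * g ^ ((d:ℝ) * (p - 1) / 4)
          * M0 ^ ((2 - ((d:ℝ) - 2) * (p - 1) / 2) / 2) := hGN'
      _ = CGN * g * (M0 ^ ((1 - s)/2) * g ^ (s/2)) ^ (p - 1) := by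
          rw [e1, e2, Real.mul_rpow (Real.rpow_nonneg hM0 _) (Real.rpow_nonneg hg0 _)]
          ring
      _ ≤ CGN * g * (W * nQ ^ (p - 1)) := by
          apply mul_le_mul_of_nonneg_left hNp (mul_nonneg hCGN0.le hg0)
      _ = CGN * nQ ^ (p - 1) * W * g := by ring
      _ = 2 * (p + 1) / ((d:ℝ) * (p - 1)) * W * g := by rw [hCnQ]
  have goal3 : 8 * (1 - W) * g ≤ 8 * g - 4 * (d:ℝ) * (p - 1) / (p + 1) * pt := by
    have hcpos : (0:ℝ) < 4 * (d:ℝ) * (p - 1) / (p + 1) := by positivity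
    have hc : 4 * (d:ℝ) * (p - 1) / (p + 1) * pt ≤ 8 * (W * g) := by
      calc 4 * (d:ℝ) * (p - 1) / (p + 1) * pt
          ≤ 4 * (d:ℝ) * (p - 1) / (p + 1)
            * (2 * (p + 1) / ((d:ℝ) * (p - 1)) * W * g) :=
            mul_le_mul_of_nonneg_left hpotb hcpos.le
        _ = 8 * (W * g) := by
            field_simp
            ring
    linarith [hc]
  exact ⟨part1, goal2, goal3⟩
end
end

section
/- For complex numbers a₁,…,a_M and p > 1, there is a constant c depending only on p and M such that | |∑_{j} a_j|^{p−1} ∑_{k} a_k − ∑_{j} |a_j|^{p−1} a_j | ≤ c ∑_{j=1}^{M} ∑_{k ≠ j} |a_k|^{p−1} |a_j|. -/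
noncomputable section

/-- The focusing nonlinearity `F(z) = |z|^{p−1} z`. -/
def Fnl (p : ℝ) (z : ℂ) : ℂ := ((‖z‖ ^ (p - 1) : ℝ) : ℂ) * z

lemma norm_Fnl (p : ℝ) (z : ℂ) : ‖Fnl p z‖ = ‖z‖ ^ (p - 1) * ‖z‖ := by
  rw [Fnl, norm_mul, Complex.norm_real, Real.norm_eq_abs,
    abs_of_nonneg (Real.rpow_nonneg (norm_nonneg z) _)]

/-- Mean value estimate for `t ↦ t^q` on an interval `[R/2, 2R]`. -/
lemma rpow_mvt (q : ℝ) (hq : 0 < q) {R x y : ℝ} (hR : 0 < R)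
    (hx : x ∈ Set.Icc (R/2) (2*R)) (hy : y ∈ Set.Icc (R/2) (2*R)) :
    |x ^ q - y ^ q| ≤ q * ((R/2) ^ (q-1) + (2*R) ^ (q-1)) * |x - y| := by
  have hs : Convex ℝ (Set.Icc (R/2) (2*R)) := convex_Icc _ _
  have hderiv : ∀ t ∈ Set.Icc (R/2) (2*R),
      HasDerivWithinAt (fun t : ℝ => t ^ q) (q * t ^ (q-1)) (Set.Icc (R/2) (2*R)) t := by
    intro t ht
    exact (Real.hasDerivAt_rpow_const (Or.inl (by nlinarith [ht.1]))).hasDerivWithinAt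
  have hbound : ∀ t ∈ Set.Icc (R/2) (2*R),
      ‖q * t ^ (q-1)‖ ≤ q * ((R/2) ^ (q-1) + (2*R) ^ (q-1)) := by
    intro t ht
    have ht0 : 0 < t := by nlinarith [ht.1]
    rw [Real.norm_eq_abs, abs_of_nonneg (by positivity)]
    rcases le_or_gt 0 (q - 1) with h | h
    · have h1 : t ^ (q-1) ≤ (2*R) ^ (q-1) := Real.rpow_le_rpow ht0.le ht.2 h
      have h2 : 0 ≤ (R/2) ^ (q-1) := Real.rpow_nonneg (by positivity) _
      nlinarith
    · have h1 : t ^ (q-1) ≤ (R/2) ^ (q-1) :=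
        Real.rpow_le_rpow_of_nonpos (by positivity) ht.1 h.le
      have h2 : 0 ≤ (2*R) ^ (q-1) := Real.rpow_nonneg (by positivity) _
      nlinarith
  have := hs.norm_image_sub_le_of_norm_hasDerivWithin_le hderiv hbound hy hx
  simpa [Real.norm_eq_abs] using this

/-- Key pointwise estimate: `‖F(z+w) - F(z)‖ ≤ C (‖z‖^{p-1} + ‖w‖^{p-1}) ‖w‖`. -/
lemma Fnl_sub_le (p : ℝ) (hp : 1 < p) : ∃ C : ℝ, 0 < C ∧ ∀ z w : ℂ,
    ‖Fnl p (z + w) - Fnl p z‖ ≤ C * ((‖z‖ ^ (p - 1) + ‖w‖ ^ (p - 1)) * ‖w‖) := by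
  set q := p - 1 with hqdef
  have hq : 0 < q := by simp only [hqdef]; linarith
  set K : ℝ := 2 * q * ((1/2 : ℝ) ^ (q-1) + (2:ℝ) ^ (q-1)) with hKdef
  have hK : 0 < K := by positivity
  refine ⟨(3:ℝ) ^ q * 3 + (2:ℝ) ^ q * 2 + K + 1, by positivity, fun z w => ?_⟩
  have hwq : (0:ℝ) ≤ ‖w‖ ^ q := Real.rpow_nonneg (norm_nonneg w) _
  have hzq : (0:ℝ) ≤ ‖z‖ ^ q := Real.rpow_nonneg (norm_nonneg z) _
  rcases le_or_gt ‖z‖ (2 * ‖w‖) with hA | hB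
  · -- easy case: z is comparable to or smaller than w
    have hzw : ‖z + w‖ ≤ 3 * ‖w‖ := le_trans (norm_add_le z w) (by linarith)
    have h1 : ‖Fnl p (z+w)‖ ≤ (3:ℝ)^q * ‖w‖^q * (3 * ‖w‖) := by
      rw [norm_Fnl]
      have := Real.rpow_le_rpow (norm_nonneg _) hzw hq.le
      rw [Real.mul_rpow (by norm_num) (norm_nonneg w)] at this
      have hn : (0:ℝ) ≤ ‖z + w‖ ^ q := Real.rpow_nonneg (norm_nonneg _) _
      nlinarith [norm_nonneg (z+w), norm_nonneg w, Real.rpow_nonneg (show (0:ℝ) ≤ 3 by norm_num) q]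
    have h2 : ‖Fnl p z‖ ≤ (2:ℝ)^q * ‖w‖^q * (2 * ‖w‖) := by
      rw [norm_Fnl]
      have := Real.rpow_le_rpow (norm_nonneg z) hA hq.le
      rw [Real.mul_rpow (by norm_num) (norm_nonneg w)] at this
      nlinarith [norm_nonneg z, norm_nonneg w, Real.rpow_nonneg (show (0:ℝ) ≤ 2 by norm_num) q]
    calc ‖Fnl p (z+w) - Fnl p z‖ ≤ ‖Fnl p (z+w)‖ + ‖Fnl p z‖ := norm_sub_le _ _
      _ ≤ (3:ℝ)^q * ‖w‖^q * (3 * ‖w‖) + (2:ℝ)^q * ‖w‖^q * (2 * ‖w‖) := by linarith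
      _ ≤ ((3:ℝ) ^ q * 3 + (2:ℝ) ^ q * 2 + K + 1) * ((‖z‖ ^ q + ‖w‖ ^ q) * ‖w‖) := by
          nlinarith [norm_nonneg w, mul_nonneg hzq (norm_nonneg w),
            mul_nonneg hwq (norm_nonneg w),
            Real.rpow_nonneg (show (0:ℝ) ≤ 3 by norm_num) q,
            Real.rpow_nonneg (show (0:ℝ) ≤ 2 by norm_num) q]
  · -- main case: 2‖w‖ < ‖z‖
    set R := ‖z‖ with hRdef
    have hR : 0 < R := lt_of_le_of_lt (by positivity) hB
    have hxmem : ‖z + w‖ ∈ Set.Icc (R/2) (2*R) := by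
      constructor
      · have := norm_sub_norm_le z (z + w)
        simp only [sub_add_cancel_left, norm_neg] at this
        linarith [norm_nonneg w]
      · have := norm_add_le z w
        linarith
    have hymem : R ∈ Set.Icc (R/2) (2*R) := by constructor <;> linarith
    have hdiff : |‖z + w‖ - R| ≤ ‖w‖ := by
      have := abs_norm_sub_norm_le (z + w) z
      simpa using this
    have hmvt := rpow_mvt q hq hR hxmem hymem
    -- decomposition
    have hdecomp : Fnl p (z + w) - Fnl p z =
        ((‖z + w‖ ^ q - R ^ q : ℝ) : ℂ) * (z + w) + ((R ^ q : ℝ) : ℂ) * w := by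
      simp only [Fnl, ← hqdef, ← hRdef]
      push_cast
      ring
    have hnorm1 : ‖Fnl p (z + w) - Fnl p z‖ ≤
        |‖z + w‖ ^ q - R ^ q| * ‖z + w‖ + R ^ q * ‖w‖ := by
      rw [hdecomp]
      refine le_trans (norm_add_le _ _) ?_
      rw [norm_mul, norm_mul, Complex.norm_real, Complex.norm_real, Real.norm_eq_abs,
        Real.norm_eq_abs, abs_of_nonneg (Real.rpow_nonneg hR.le _)]
    -- the derivative bound rewritten
    have hhalf : ((R:ℝ)/2) ^ (q-1) = (1/2:ℝ)^(q-1) * R^(q-1) := by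
      rw [show R/2 = (1/2 : ℝ) * R by ring, Real.mul_rpow (by norm_num) hR.le]
    have hdouble : ((2:ℝ)*R) ^ (q-1) = (2:ℝ)^(q-1) * R^(q-1) := by
      rw [Real.mul_rpow (by norm_num) hR.le]
    have hRq : R ^ (q-1) * R = R ^ q := by
      rw [← Real.rpow_add_one hR.ne']
      ring_nf
    have hmain : |‖z + w‖ ^ q - R ^ q| * ‖z + w‖ ≤ K * (R ^ q * ‖w‖) := by
      have hzw2 : ‖z + w‖ ≤ 2 * R := hxmem.2
      have habs : (0:ℝ) ≤ |‖z + w‖ ^ q - R ^ q| := abs_nonneg _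
      have hD : q * ((R/2) ^ (q-1) + (2*R) ^ (q-1)) * ‖w‖ * (2 * R) = K * (R ^ q * ‖w‖) := by
        rw [hhalf, hdouble, hKdef, ← hRq]
        ring
      calc |‖z + w‖ ^ q - R ^ q| * ‖z + w‖
          ≤ (q * ((R/2) ^ (q-1) + (2*R) ^ (q-1)) * ‖w‖) * (2 * R) := by
            have hb : |‖z + w‖ ^ q - R ^ q| ≤ q * ((R/2) ^ (q-1) + (2*R) ^ (q-1)) * ‖w‖ :=
              le_trans hmvt (by
                have hc : 0 ≤ q * ((R/2) ^ (q-1) + (2*R) ^ (q-1)) := by positivity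
                exact mul_le_mul_of_nonneg_left hdiff hc)
            have := mul_le_mul hb hzw2 (norm_nonneg _) (by positivity)
            linarith
        _ = K * (R ^ q * ‖w‖) := hD
    have hRqnn : (0:ℝ) ≤ R ^ q := Real.rpow_nonneg hR.le _
    calc ‖Fnl p (z + w) - Fnl p z‖
        ≤ K * (R ^ q * ‖w‖) + R ^ q * ‖w‖ := by linarith
      _ ≤ ((3:ℝ) ^ q * 3 + (2:ℝ) ^ q * 2 + K + 1) * ((‖z‖ ^ q + ‖w‖ ^ q) * ‖w‖) := by
          have : R ^ q = ‖z‖ ^ q := rfl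
          nlinarith [mul_nonneg hRqnn (norm_nonneg w), mul_nonneg hwq (norm_nonneg w),
            Real.rpow_nonneg (show (0:ℝ) ≤ 3 by norm_num) q,
            Real.rpow_nonneg (show (0:ℝ) ≤ 2 by norm_num) q]

/-- Elementary inequality: for `a₁,…,a_M ∈ ℂ` and `p > 1`, there is a constant `c`
depending only on `p` and `M` such that
`| |∑ⱼ aⱼ|^{p−1} ∑ₖ aₖ − ∑ⱼ |aⱼ|^{p−1} aⱼ | ≤ c ∑ⱼ ∑_{k ≠ j} |aₖ|^{p−1} |aⱼ|`. -/
theorem sum_nonlinearity_cross_terms (p : ℝ) (hp : 1 < p) (M : ℕ) (hM : 1 ≤ M) :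
    ∃ c : ℝ, 0 < c ∧ ∀ a : Fin M → ℂ,
      ‖Fnl p (∑ j : Fin M, a j) - ∑ j : Fin M, Fnl p (a j)‖
        ≤ c * ∑ j : Fin M, ∑ k ∈ Finset.univ.erase j, ‖a k‖ ^ (p - 1) * ‖a j‖ := by
  obtain ⟨C, hC, hkey⟩ := Fnl_sub_le p hp
  set q := p - 1 with hqdef
  have hq : 0 < q := by simp only [hqdef]; linarith
  refine ⟨C * (1 + (M:ℝ) ^ p * M) + 1, by positivity, fun a => ?_⟩
  set T : ℝ := ∑ j : Fin M, ∑ k ∈ Finset.univ.erase j, ‖a k‖ ^ q * ‖a j‖ with hTdef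
  have hTnn : 0 ≤ T := by
    apply Finset.sum_nonneg; intro j _
    apply Finset.sum_nonneg; intro k _
    exact mul_nonneg (Real.rpow_nonneg (norm_nonneg _) _) (norm_nonneg _)
  have hinstne : Nonempty (Fin M) := ⟨⟨0, hM⟩⟩
  obtain ⟨j₀, -, hj₀⟩ := Finset.exists_max_image Finset.univ (fun j => ‖a j‖)
    ⟨⟨0, hM⟩, Finset.mem_univ _⟩
  set w : ℂ := ∑ j ∈ Finset.univ.erase j₀, a j with hwdef
  have hsum : ∑ j : Fin M, a j = a j₀ + w := (Finset.add_sum_erase _ _ (Finset.mem_univ j₀)).symm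
  have hsumF : ∑ j : Fin M, Fnl p (a j) = Fnl p (a j₀) + ∑ j ∈ Finset.univ.erase j₀, Fnl p (a j) :=
    (Finset.add_sum_erase _ _ (Finset.mem_univ j₀)).symm
  rcases Finset.eq_empty_or_nonempty (Finset.univ.erase j₀) with hemp | hne
  · -- M = 1
    have hw0 : w = 0 := by rw [hwdef, hemp, Finset.sum_empty]
    have : Fnl p (∑ j : Fin M, a j) - ∑ j : Fin M, Fnl p (a j) = 0 := by
      rw [hsum, hsumF, hw0, hemp, Finset.sum_empty, add_zero, add_zero, sub_self]
    rw [this, norm_zero]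
    positivity
  · obtain ⟨j₁, hj₁mem, hj₁⟩ := Finset.exists_max_image _ (fun j => ‖a j‖) hne
    set m := ‖a j₀‖ with hmdef
    set s := ‖a j₁‖ with hsdef
    have hsm : s ≤ m := hj₀ j₁ (Finset.mem_univ _)
    have hs0 : 0 ≤ s := norm_nonneg _
    have hm0 : 0 ≤ m := norm_nonneg _
    have hM1 : (1:ℝ) ≤ (M:ℝ) := by exact_mod_cast hM
    -- ‖w‖ ≤ M * s
    have hwle : ‖w‖ ≤ (M:ℝ) * s := by
      calc ‖w‖ ≤ ∑ j ∈ Finset.univ.erase j₀, ‖a j‖ := norm_sum_le _ _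
        _ ≤ (Finset.univ.erase j₀).card • s :=
            Finset.sum_le_card_nsmul _ _ _ (fun j hj => hj₁ j hj)
        _ = ((Finset.univ.erase j₀).card : ℝ) * s := by rw [nsmul_eq_mul]
        _ ≤ (M:ℝ) * s := by
            apply mul_le_mul_of_nonneg_right _ hs0
            exact_mod_cast le_trans (Finset.card_le_card (Finset.subset_univ _))
              (le_of_eq (by simp))
    -- single-term bounds into T
    have hterm : ∀ j k : Fin M, j ≠ k → ‖a k‖ ^ q * ‖a j‖ ≤ T := by
      intro j k hjk
      have h1 : ‖a k‖ ^ q * ‖a j‖ ≤ ∑ k' ∈ Finset.univ.erase j, ‖a k'‖ ^ q * ‖a j‖ := by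
        apply Finset.single_le_sum (f := fun k' => ‖a k'‖ ^ q * ‖a j‖)
        · intro i _
          exact mul_nonneg (Real.rpow_nonneg (norm_nonneg _) _) (norm_nonneg _)
        · exact Finset.mem_erase.mpr ⟨fun h => hjk h.symm, Finset.mem_univ _⟩
      refine le_trans h1 ?_
      apply Finset.single_le_sum (f := fun j' => ∑ k' ∈ Finset.univ.erase j', ‖a k'‖ ^ q * ‖a j'‖)
      · intro i _
        apply Finset.sum_nonneg; intro k' _
        exact mul_nonneg (Real.rpow_nonneg (norm_nonneg _) _) (norm_nonneg _)
      · exact Finset.mem_univ _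
    have hj₁ne : j₁ ≠ j₀ := (Finset.mem_erase.mp hj₁mem).1
    -- s^q * m ≤ T
    have hsqm : s ^ q * m ≤ T := hterm j₀ j₁ (Ne.symm hj₁ne)
    -- m^q * ‖w‖ ≤ T
    have hmqw : m ^ q * ‖w‖ ≤ T := by
      have h1 : m ^ q * ‖w‖ ≤ ∑ j ∈ Finset.univ.erase j₀, m ^ q * ‖a j‖ := by
        rw [← Finset.mul_sum]
        exact mul_le_mul_of_nonneg_left (norm_sum_le _ _) (Real.rpow_nonneg hm0 _)
      refine le_trans h1 ?_
      rw [hTdef]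
      calc ∑ j ∈ Finset.univ.erase j₀, m ^ q * ‖a j‖
          ≤ ∑ j ∈ Finset.univ.erase j₀, ∑ k ∈ Finset.univ.erase j, ‖a k‖ ^ q * ‖a j‖ := by
            apply Finset.sum_le_sum
            intro j hj
            apply Finset.single_le_sum (f := fun k => ‖a k‖ ^ q * ‖a j‖)
            · intro i _
              exact mul_nonneg (Real.rpow_nonneg (norm_nonneg _) _) (norm_nonneg _)
            · exact Finset.mem_erase.mpr ⟨Ne.symm (Finset.mem_erase.mp hj).1, Finset.mem_univ _⟩
        _ ≤ ∑ j : Fin M, ∑ k ∈ Finset.univ.erase j, ‖a k‖ ^ q * ‖a j‖ := by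
            apply Finset.sum_le_sum_of_subset_of_nonneg (Finset.subset_univ _)
            intro j _ _
            apply Finset.sum_nonneg; intro k _
            exact mul_nonneg (Real.rpow_nonneg (norm_nonneg _) _) (norm_nonneg _)
    -- ∑ tail norms ≤ T
    have htail : ∑ j ∈ Finset.univ.erase j₀, ‖Fnl p (a j)‖ ≤ T := by
      have h1 : ∀ j ∈ Finset.univ.erase j₀, ‖Fnl p (a j)‖ ≤ ‖a j‖ ^ q * m := by
        intro j hj
        rw [norm_Fnl, ← hqdef]
        exact mul_le_mul_of_nonneg_left (hj₀ j (Finset.mem_univ _))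
          (Real.rpow_nonneg (norm_nonneg _) _)
      calc ∑ j ∈ Finset.univ.erase j₀, ‖Fnl p (a j)‖
          ≤ ∑ j ∈ Finset.univ.erase j₀, ‖a j‖ ^ q * m := Finset.sum_le_sum h1
        _ ≤ T := by
            rw [hTdef]
            refine le_trans (Finset.single_le_sum
              (f := fun j' => ∑ k ∈ Finset.univ.erase j', ‖a k‖ ^ q * ‖a j'‖) ?_
              (Finset.mem_univ j₀)) (le_refl _) |>.trans' ?_
            · intro i _
              apply Finset.sum_nonneg; intro k _
              exact mul_nonneg (Real.rpow_nonneg (norm_nonneg _) _) (norm_nonneg _)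
            · exact le_of_eq rfl
    -- ‖w‖^q * ‖w‖ ≤ M^p * M * (s^q * m)
    have hwqw : ‖w‖ ^ q * ‖w‖ ≤ (M:ℝ) ^ p * M * (s ^ q * m) := by
      have h1 : ‖w‖ ^ q ≤ ((M:ℝ) * s) ^ q :=
        Real.rpow_le_rpow (norm_nonneg _) hwle hq.le
      have h2 : ((M:ℝ) * s) ^ q = (M:ℝ) ^ q * s ^ q :=
        Real.mul_rpow (by positivity) hs0
      have h3 : (M:ℝ) ^ q ≤ (M:ℝ) ^ p :=
        Real.rpow_le_rpow_of_exponent_le hM1 (by simp only [hqdef]; linarith)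
      have hwn : 0 ≤ ‖w‖ := norm_nonneg _
      have hMq : (0:ℝ) ≤ (M:ℝ) ^ q := Real.rpow_nonneg (by positivity) _
      have hsq : (0:ℝ) ≤ s ^ q := Real.rpow_nonneg hs0 _
      calc ‖w‖ ^ q * ‖w‖ ≤ ((M:ℝ) ^ q * s ^ q) * ((M:ℝ) * s) := by
            rw [← h2]; exact mul_le_mul h1 hwle hwn (Real.rpow_nonneg (by positivity) _)
        _ = ((M:ℝ) ^ q * (M:ℝ)) * (s ^ q * s) := by ring
        _ ≤ ((M:ℝ) ^ p * (M:ℝ)) * (s ^ q * m) := by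
            apply mul_le_mul
            · exact mul_le_mul_of_nonneg_right h3 (by positivity)
            · exact mul_le_mul_of_nonneg_left hsm hsq
            · positivity
            · positivity
    -- put together
    have hkeyz := hkey (a j₀) w
    rw [← hmdef] at hkeyz
    have hsplit : ‖Fnl p (∑ j : Fin M, a j) - ∑ j : Fin M, Fnl p (a j)‖
        ≤ ‖Fnl p (a j₀ + w) - Fnl p (a j₀)‖ + ∑ j ∈ Finset.univ.erase j₀, ‖Fnl p (a j)‖ := by
      rw [hsum, hsumF]
      calc ‖Fnl p (a j₀ + w) - (Fnl p (a j₀) + ∑ j ∈ Finset.univ.erase j₀, Fnl p (a j))‖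
          = ‖(Fnl p (a j₀ + w) - Fnl p (a j₀)) - ∑ j ∈ Finset.univ.erase j₀, Fnl p (a j)‖ := by
            ring_nf
        _ ≤ ‖Fnl p (a j₀ + w) - Fnl p (a j₀)‖ + ‖∑ j ∈ Finset.univ.erase j₀, Fnl p (a j)‖ :=
            norm_sub_le _ _
        _ ≤ ‖Fnl p (a j₀ + w) - Fnl p (a j₀)‖ + ∑ j ∈ Finset.univ.erase j₀, ‖Fnl p (a j)‖ := by
            gcongr
            exact norm_sum_le _ _
    have hCmul : C * ((m ^ q + ‖w‖ ^ q) * ‖w‖) ≤ C * (T + (M:ℝ) ^ p * M * T) := by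
      apply mul_le_mul_of_nonneg_left _ hC.le
      have h1 : (m ^ q + ‖w‖ ^ q) * ‖w‖ = m ^ q * ‖w‖ + ‖w‖ ^ q * ‖w‖ := by ring
      rw [h1]
      have h2 : (M:ℝ) ^ p * M * (s ^ q * m) ≤ (M:ℝ) ^ p * M * T := by
        apply mul_le_mul_of_nonneg_left hsqm
        positivity
      linarith
    calc ‖Fnl p (∑ j : Fin M, a j) - ∑ j : Fin M, Fnl p (a j)‖
        ≤ ‖Fnl p (a j₀ + w) - Fnl p (a j₀)‖ + ∑ j ∈ Finset.univ.erase j₀, ‖Fnl p (a j)‖ := hsplit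
      _ ≤ C * ((m ^ q + ‖w‖ ^ q) * ‖w‖) + T := by linarith
      _ ≤ C * (T + (M:ℝ) ^ p * M * T) + T := by linarith
      _ = (C * (1 + (M:ℝ) ^ p * M) + 1) * T := by ring
end
end
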